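/- arXiv:1410.6235 — 3 statements merged into one kernel-verified Lean document; each statement's English description precedes it below -/
import Mathlib

section
/- Let p, q, r be positive C¹ functions on [0,L], α₁ > 0, α₂ > 0, and for λ > 0 let f(·;λ) solve (p f')' - (q - λ r) f = 0 with f(0;λ) = 1, f'(0;λ) = α₁λ + α₂. On any open interval of λ > 0 on which f(x;λ) > 0 for all x ∈ [0,L], the function h₁(λ) = p(L) f'(L;λ)/(λ f(L;λ)) is strictly decreasing; indeed d/dλ h₁(λ) = -(λ f(L;λ))⁻² (α₂ p(0) + ∫₀ᴸ [p (f')² + q f²] dx) < 0. -/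
open Set Filter Topology intervalIntegral

/-!
The Lagrange identity for `f(·;μ)` and `f(·;ν)` has boundary term `p(0) α₁ (μ - ν)` at `0`,
because `f'(0;λ)` is affine in `λ`. Hence, for `ν ≠ μ`, the difference quotient
`(h₁ ν - h₁ μ) / (ν - μ)` equals an expression continuous in `ν`, involving `∫ r f(·;μ) f(·;ν)`.
Its value at `ν = μ` is therefore `h₁'(μ)`, and the energy identity
`∫ (p f'² + q f²) = μ ∫ r f² + [p f' f]₀ᴸ` turns it into
`-(μ f(L;μ))⁻² (α₂ p(0) + ∫ (p f'² + q f²))`, which is negative since `p, q > 0` and `α₂ > 0`.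
-/
theorem hasDerivAt_of_slope_eventuallyEq {𝕜 F : Type*} [NontriviallyNormedField 𝕜]
    [NormedAddCommGroup F] [NormedSpace 𝕜 F] {h Φ : 𝕜 → F} {x : 𝕜}
    (hslope : slope h x =ᶠ[𝓝[≠] x] Φ) (hΦ : ContinuousAt Φ x) : HasDerivAt h (Φ x) x :=
  hasDerivAt_iff_tendsto_slope.mpr <| (hΦ.tendsto.mono_left nhdsWithin_le_nhds).congr' hslope.symm

theorem continuous_intervalIntegral_mul_of_continuousOn {a b : ℝ} (hab : a ≤ b) {w : ℝ → ℝ}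
    (hw : ContinuousOn w (Icc a b)) {F : ℝ → ℝ → ℝ} (hF : Continuous (Function.uncurry F)) :
    Continuous fun ν => ∫ x in a..b, w x * F ν x := by
  -- clamping to `[a, b]` extends `w` continuously without changing the integrals
  have hw' : Continuous fun x => w (projIcc a b hab x) :=
    hw.comp_continuous (continuous_subtype_val.comp continuous_projIcc) fun x =>
      (projIcc a b hab x).2
  have hclamp : ∀ ν, ∫ x in a..b, w x * F ν x = ∫ x in a..b, w (projIcc a b hab x) * F ν x :=
    fun ν => integral_congr fun x hx => by
      rw [uIcc_of_le hab] at hx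
      simp [projIcc_of_mem hab hx]
  simp only [hclamp]
  exact continuous_parametric_intervalIntegral_of_continuous'
    ((hw'.comp continuous_snd).mul hF) a b

structure IsSturmLiouvilleSolution (p q r : ℝ → ℝ) (μ a b : ℝ) (u : ℝ → ℝ) : Prop where
  continuousOn : ContinuousOn u (Icc a b)
  continuousOn_deriv : ContinuousOn (deriv u) (Icc a b)
  differentiableAt : ∀ x ∈ Ioo a b, DifferentiableAt ℝ u x
  hasDerivAt_flux :
    ∀ x ∈ Ioo a b, HasDerivAt (fun y => p y * deriv u y) ((q x - μ * r x) * u x) x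

namespace IsSturmLiouvilleSolution

variable {p q r u v : ℝ → ℝ} {μ ν a b : ℝ}

theorem of_contDiff (hp : DifferentiableOn ℝ p (Ioo a b)) (hu : ContDiff ℝ 1 u)
    (hu' : ContDiff ℝ 1 (deriv u))
    (hode : ∀ x ∈ Ioo a b, deriv (fun y => p y * deriv u y) x = (q x - μ * r x) * u x) :
    IsSturmLiouvilleSolution p q r μ a b u where
  continuousOn := hu.continuous.continuousOn
  continuousOn_deriv := hu'.continuous.continuousOn
  differentiableAt x _ := hu.differentiable one_ne_zero x
  hasDerivAt_flux x hx := hode x hx ▸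
    ((hp.differentiableAt (isOpen_Ioo.mem_nhds hx)).mul
      (hu'.differentiable one_ne_zero x)).hasDerivAt

variable (hab : a ≤ b) (hp : ContinuousOn p (Icc a b)) (hq : ContinuousOn q (Icc a b))
  (hr : ContinuousOn r (Icc a b))
include hab hp hq hr

theorem green_identity (hu : IsSturmLiouvilleSolution p q r μ a b u)
    (hv : ContinuousOn v (Icc a b)) (hv' : ContinuousOn (deriv v) (Icc a b))
    (hvd : ∀ x ∈ Ioo a b, DifferentiableAt ℝ v x) :
    ∫ x in a..b, (p x * deriv u x * deriv v x + (q x - μ * r x) * u x * v x) =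
      p b * deriv u b * v b - p a * deriv u a * v a := by
  have hu₀ := hu.continuousOn
  have hu₁ := hu.continuousOn_deriv
  refine integral_eq_sub_of_hasDerivAt_of_le (f := fun x => p x * deriv u x * v x) hab
    (by fun_prop) (fun x hx => ?_) (ContinuousOn.intervalIntegrable_of_Icc hab (by fun_prop))
  exact ((hu.hasDerivAt_flux x hx).mul (hvd x hx).hasDerivAt).congr_deriv (by ring)

theorem lagrange_identity (hu : IsSturmLiouvilleSolution p q r μ a b u)
    (hv : IsSturmLiouvilleSolution p q r ν a b v) :
    (ν - μ) * ∫ x in a..b, r x * (u x * v x) =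
      (p b * deriv u b * v b - p b * deriv v b * u b) -
        (p a * deriv u a * v a - p a * deriv v a * u a) := by
  have hu₀ := hu.continuousOn
  have hu₁ := hu.continuousOn_deriv
  have hv₀ := hv.continuousOn
  have hv₁ := hv.continuousOn_deriv
  calc (ν - μ) * ∫ x in a..b, r x * (u x * v x)
      = ∫ x in a..b, ((p x * deriv u x * deriv v x + (q x - μ * r x) * u x * v x) -
          (p x * deriv v x * deriv u x + (q x - ν * r x) * v x * u x)) := by
        rw [← intervalIntegral.integral_const_mul]
        congr 1 with x
        ring
    _ = (∫ x in a..b, (p x * deriv u x * deriv v x + (q x - μ * r x) * u x * v x)) -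
          ∫ x in a..b, (p x * deriv v x * deriv u x + (q x - ν * r x) * v x * u x) :=
        integral_sub (ContinuousOn.intervalIntegrable_of_Icc hab (by fun_prop))
          (ContinuousOn.intervalIntegrable_of_Icc hab (by fun_prop))
    _ = _ := by
        rw [hu.green_identity hab hp hq hr hv₀ hv₁ hv.differentiableAt,
          hv.green_identity hab hp hq hr hu₀ hu₁ hu.differentiableAt]
        ring

theorem energy_identity (hu : IsSturmLiouvilleSolution p q r μ a b u) :
    ∫ x in a..b, (p x * deriv u x ^ 2 + q x * u x ^ 2) =
      μ * (∫ x in a..b, r x * (u x * u x)) + (p b * deriv u b * u b - p a * deriv u a * u a) := by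
  have hu₀ := hu.continuousOn
  have hu₁ := hu.continuousOn_deriv
  rw [← intervalIntegral.integral_const_mul,
    ← hu.green_identity hab hp hq hr hu₀ hu₁ hu.differentiableAt,
    ← integral_add (ContinuousOn.intervalIntegrable_of_Icc hab (by fun_prop))
      (ContinuousOn.intervalIntegrable_of_Icc hab (by fun_prop))]
  congr 1 with x
  ring

end IsSturmLiouvilleSolution

/-- The function `h₁` of the statement. -/
noncomputable def boundaryRatio (p : ℝ → ℝ) (f : ℝ → ℝ → ℝ) (L μ : ℝ) : ℝ :=
  p L * deriv (f μ) L / (μ * f μ L)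

section SpectralFamily

variable {L a1 a2 : ℝ} {p q r : ℝ → ℝ} {f : ℝ → ℝ → ℝ}
  (hL : 0 ≤ L) (hp : ContinuousOn p (Icc 0 L)) (hq : ContinuousOn q (Icc 0 L))
  (hr : ContinuousOn r (Icc 0 L)) (hsol : ∀ μ, IsSturmLiouvilleSolution p q r μ 0 L (f μ))
  (hinit0 : ∀ μ, f μ 0 = 1) (hinit1 : ∀ μ, deriv (f μ) 0 = a1 * μ + a2)
include hL hp hq hr hsol hinit0 hinit1

theorem slope_boundaryRatio {μ ν : ℝ} (hμ : μ ≠ 0) (hν : ν ≠ 0) (hfμ : f μ L ≠ 0)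
    (hfν : f ν L ≠ 0) (hμν : ν ≠ μ) :
    slope (boundaryRatio p f L) μ ν =
      (μ * (p 0 * a1) - μ * (∫ x in 0..L, r x * (f μ x * f ν x)) -
        p L * deriv (f μ) L * f ν L) / (μ * ν * (f μ L * f ν L)) := by
  have hW := (hsol μ).lagrange_identity hL hp hq hr (hsol ν)
  rw [hinit0, hinit0, hinit1, hinit1] at hW
  rw [slope_def_field, boundaryRatio, boundaryRatio]
  generalize ∫ x in 0..L, r x * (f μ x * f ν x) = J at hW ⊢
  field_simp [sub_ne_zero.mpr hμν]
  linear_combination μ * hW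

theorem hasDerivAt_boundaryRatio (hf : Continuous (Function.uncurry f)) {μ : ℝ} (hμ : μ ≠ 0)
    (hfμ : f μ L ≠ 0) :
    HasDerivAt (boundaryRatio p f L)
      (-((μ * f μ L) ^ 2)⁻¹ *
        (a2 * p 0 + ∫ x in 0..L, (p x * deriv (f μ) x ^ 2 + q x * f μ x ^ 2))) μ := by
  have hfL : Continuous fun ν => f ν L := hf.comp (continuous_id.prodMk continuous_const)
  have hJ : Continuous fun ν => ∫ x in 0..L, r x * (f μ x * f ν x) :=
    continuous_intervalIntegral_mul_of_continuousOn hL hr (F := fun ν x => f μ x * f ν x)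
      ((hf.comp (continuous_const.prodMk continuous_snd)).mul hf)
  set Φ : ℝ → ℝ := fun ν => (μ * (p 0 * a1) - μ * (∫ x in 0..L, r x * (f μ x * f ν x)) -
    p L * deriv (f μ) L * f ν L) / (μ * ν * (f μ L * f ν L)) with hΦ_def
  have hslope : slope (boundaryRatio p f L) μ =ᶠ[𝓝[≠] μ] Φ := by
    filter_upwards [self_mem_nhdsWithin,
      nhdsWithin_le_nhds (continuousAt_id.eventually_ne hμ),
      nhdsWithin_le_nhds (hfL.continuousAt.eventually_ne hfμ)] with ν hμν hν hfν
    exact slope_boundaryRatio hL hp hq hr hsol hinit0 hinit1 hμ hν hfμ hfν hμν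
  have hΦ : ContinuousAt Φ μ := by
    rw [hΦ_def]
    fun_prop (disch := simp [hμ, hfμ])
  refine (hasDerivAt_of_slope_eventuallyEq hslope hΦ).congr_deriv ?_
  have hE := (hsol μ).energy_identity hL hp hq hr
  rw [hinit0, hinit1] at hE
  simp only [hΦ_def]
  generalize ∫ x in 0..L, r x * (f μ x * f μ x) = J at hE ⊢
  rw [hE]
  field_simp
  ring

end SpectralFamily

theorem stmt_5_general (L a1 a2 : ℝ) (hL : 0 < L) (ha2 : 0 < a2)
    (p q r : ℝ → ℝ) (f : ℝ → ℝ → ℝ) (I : Set ℝ)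
    (hIpos : I ⊆ Ioi 0) (hIconn : I.OrdConnected)
    (hp : ContDiffOn ℝ 1 p (Icc 0 L)) (hq : ContDiffOn ℝ 1 q (Icc 0 L))
    (hr : ContDiffOn ℝ 1 r (Icc 0 L))
    (hppos : ∀ x ∈ Icc 0 L, 0 < p x) (hqpos : ∀ x ∈ Icc 0 L, 0 < q x)
    (hjoint : ContDiff ℝ 1 (fun z : ℝ × ℝ => f z.1 z.2))
    (hjoint' : ContDiff ℝ 1 (fun z : ℝ × ℝ => deriv (f z.1) z.2))
    (hode : ∀ μ : ℝ, ∀ x ∈ Icc 0 L,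
      deriv (fun y => p y * deriv (f μ) y) x - (q x - μ * r x) * f μ x = 0)
    (hinit0 : ∀ μ : ℝ, f μ 0 = 1)
    (hinit1 : ∀ μ : ℝ, deriv (f μ) 0 = a1 * μ + a2)
    (hfpos : ∀ μ ∈ I, ∀ x ∈ Icc 0 L, 0 < f μ x) :
    StrictAntiOn (fun μ => p L * deriv (f μ) L / (μ * f μ L)) I ∧
      ∀ μ ∈ I,
        deriv (fun ν => p L * deriv (f ν) L / (ν * f ν L)) μ
          = -((μ * f μ L) ^ 2)⁻¹ *
            (a2 * p 0 + ∫ x in (0:ℝ)..L,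
              (p x * (deriv (f μ) x) ^ 2 + q x * (f μ x) ^ 2)) ∧
        deriv (fun ν => p L * deriv (f ν) L / (ν * f ν L)) μ < 0 := by
  have hsol (μ : ℝ) : IsSturmLiouvilleSolution p q r μ 0 L (f μ) :=
    .of_contDiff ((hp.differentiableOn one_ne_zero).mono Ioo_subset_Icc_self)
      (hjoint.comp (contDiff_const.prodMk contDiff_id))
      (hjoint'.comp (contDiff_const.prodMk contDiff_id))
      fun x hx => sub_eq_zero.mp (hode μ x (Ioo_subset_Icc_self hx))
  have hμ0 {μ : ℝ} (hμ : μ ∈ I) : μ ≠ 0 := (hIpos hμ).ne'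
  have hfL {μ : ℝ} (hμ : μ ∈ I) : f μ L ≠ 0 := (hfpos μ hμ L ⟨hL.le, le_rfl⟩).ne'
  have hderiv {μ : ℝ} (hμ : μ ∈ I) :=
    hasDerivAt_boundaryRatio hL.le hp.continuousOn hq.continuousOn hr.continuousOn hsol hinit0
      hinit1 hjoint.continuous (hμ0 hμ) (hfL hμ)
  have hneg {μ : ℝ} (hμ : μ ∈ I) : deriv (boundaryRatio p f L) μ < 0 := by
    have hp0 := hppos 0 ⟨le_rfl, hL.le⟩
    have hK : 0 ≤ ∫ x in (0:ℝ)..L, (p x * deriv (f μ) x ^ 2 + q x * f μ x ^ 2) :=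
      integral_nonneg hL.le fun x hx => by
        have := hppos x hx
        have := hqpos x hx
        positivity
    have := hμ0 hμ
    have := hfL hμ
    rw [(hderiv hμ).deriv, neg_mul, neg_lt_zero]
    positivity
  refine ⟨strictAntiOn_of_deriv_neg hIconn.convex
    (fun μ hμ => (hderiv hμ).continuousAt.continuousWithinAt)
    fun μ hμ => hneg (interior_subset hμ), fun μ hμ => ⟨(hderiv hμ).deriv, hneg hμ⟩⟩

/-- On an open interval of positive `λ` where `f(·;λ) > 0` on `[0,L]`, the function
`h₁(λ) = p(L) f'(L;λ)/(λ f(L;λ))` is strictly decreasing, with the explicit derivative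
`h₁'(λ) = -(λ f(L;λ))⁻² (α₂ p(0) + ∫₀ᴸ [p (f')² + q f²])`. -/
theorem stmt_5 (L a1 a2 : ℝ) (hL : 0 < L) (ha1 : 0 < a1) (ha2 : 0 < a2)
    (p q r : ℝ → ℝ) (f : ℝ → ℝ → ℝ) (I : Set ℝ)
    (hI : IsOpen I) (hIpos : I ⊆ Ioi 0) (hIconn : I.OrdConnected)
    (hp : ContDiffOn ℝ 1 p (Icc 0 L)) (hq : ContDiffOn ℝ 1 q (Icc 0 L))
    (hr : ContDiffOn ℝ 1 r (Icc 0 L))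
    (hppos : ∀ x ∈ Icc 0 L, 0 < p x) (hqpos : ∀ x ∈ Icc 0 L, 0 < q x)
    (hrpos : ∀ x ∈ Icc 0 L, 0 < r x)
    (hfsmooth : ∀ μ : ℝ, ContDiffOn ℝ 2 (f μ) (Icc 0 L))
    (hjoint : ContDiff ℝ 1 (fun z : ℝ × ℝ => f z.1 z.2))
    (hjoint' : ContDiff ℝ 1 (fun z : ℝ × ℝ => deriv (f z.1) z.2))
    (hode : ∀ μ : ℝ, ∀ x ∈ Icc 0 L,
      deriv (fun y => p y * deriv (f μ) y) x - (q x - μ * r x) * f μ x = 0)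
    (hinit0 : ∀ μ : ℝ, f μ 0 = 1)
    (hinit1 : ∀ μ : ℝ, deriv (f μ) 0 = a1 * μ + a2)
    (hfpos : ∀ μ ∈ I, ∀ x ∈ Icc 0 L, 0 < f μ x) :
    StrictAntiOn (fun μ => p L * deriv (f μ) L / (μ * f μ L)) I ∧
      ∀ μ ∈ I,
        deriv (fun ν => p L * deriv (f ν) L / (ν * f ν L)) μ
          = -((μ * f μ L) ^ 2)⁻¹ *
            (a2 * p 0 + ∫ x in (0:ℝ)..L,
              (p x * (deriv (f μ) x) ^ 2 + q x * (f μ x) ^ 2)) ∧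
        deriv (fun ν => p L * deriv (f ν) L / (ν * f ν L)) μ < 0 :=
  stmt_5_general L a1 a2 hL ha2 p q r f I hIpos hIconn hp hq hr hppos hqpos hjoint hjoint' hode
    hinit0 hinit1 hfpos
end

section
/- Let p, q, r be positive continuous functions on [0,L] with p' > 0, α₁ > 0, α₂ > 0, and let f(·;λ) solve (p f')' - (q - λ r) f = 0 with f(0;λ) = 1, f'(0;λ) = α₁λ + α₂. Then for all sufficiently negative λ, f(·;λ) has exactly one zero in (0,L). -/
/-!
With `V = q - λ r` and the flux `P = p f'`, the equation becomes `f' = P / p`, `P' = V f`, and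
for `λ ≪ 0` we have `V ≥ 0`, `f(0) = 1` and `P(0) = p(0) (α₁ λ + α₂) ≪ 0`.

Uniqueness: `(f P)' = P² / p + V f² ≥ 0`, so `f P` vanishes identically between two zeros of
`f`, which forces `P = 0` at the first one.

Existence: while `f > 0` and `P < 0`, the energy `P² - K pM f²` (with `V ≤ K`, `p ≤ pM`) is
nondecreasing. Since `P(0)²` grows quadratically in `λ` and `K` only linearly, `P` stays below
some `-δ` as long as `f > 0`, so `f` decreases at rate at least `δ / pM` and vanishes before `L`.
-/

open Set Filter Topology

theorem ContinuousOn.exists_first_zero {g : ℝ → ℝ} {a x : ℝ} (hg : ContinuousOn g (Icc a x))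
    (hax : a ≤ x) (ha : 0 < g a) (hx : g x ≤ 0) :
    ∃ z ∈ Ioc a x, g z = 0 ∧ ∀ y ∈ Ico a z, 0 < g y := by
  set Z := Icc a x ∩ g ⁻¹' Iic 0
  have hbdd : BddBelow Z := ⟨a, fun y hy => hy.1.1⟩
  have hz : sInf Z ∈ Z :=
    (hg.preimage_isClosed_of_isClosed isClosed_Icc isClosed_Iic).csInf_mem
      ⟨x, ⟨hax, le_rfl⟩, hx⟩ hbdd
  set z := sInf Z
  have hpos : ∀ y ∈ Ico a z, 0 < g y := fun y hy =>
    not_le.1 fun h => (csInf_le hbdd ⟨⟨hy.1, hy.2.le.trans hz.1.2⟩, h⟩).not_gt hy.2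
  have haz : a < z := hz.1.1.lt_of_ne fun h => (h ▸ hz.2 : g a ≤ 0).not_gt ha
  have hgz : g z ∈ closure (Ioi 0) :=
    ((hg z hz.1).mono (Ico_subset_Icc_self.trans (Icc_subset_Icc_right hz.1.2))).mem_closure
      (by rw [closure_Ico haz.ne]; exact right_mem_Icc.2 haz.le) hpos
  rw [closure_Ioi] at hgz
  exact ⟨z, ⟨haz, hz.1.2⟩, le_antisymm hz.2 hgz, hpos⟩

theorem eventually_atBot_neg_and_affine_le_sq {α : ℝ} (hα : 0 < α) (β D E : ℝ) :
    ∀ᶠ μ in atBot, α * μ + β < 0 ∧ D + E * μ ≤ (α * μ + β) ^ 2 := by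
  have hlin : Tendsto (fun μ => α * μ + β) atBot atBot :=
    tendsto_atBot_add_const_right _ β (tendsto_id.const_mul_atBot hα)
  have hquad : Tendsto (fun μ => (α * μ + β) * (α * μ + β - E / α)) atBot atTop :=
    hlin.atBot_mul_atBot₀ (tendsto_atBot_add_const_right _ _ hlin)
  filter_upwards [hlin.eventually_lt_atBot 0, hquad.eventually_ge_atTop (D - E * β / α)]
    with μ hneg hge
  refine ⟨hneg, ?_⟩
  have : (α * μ + β) * (α * μ + β - E / α) = (α * μ + β) ^ 2 - E * μ - E * β / α := by
    field_simp
    ring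
  linarith

/-- First-order form of `(p g')' = V g` on `[a, b)`, with flux `P = p g'`. -/
structure IsSturmSolution (p V : ℝ → ℝ) (a b : ℝ) (g P : ℝ → ℝ) : Prop where
  continuousOn_sol : ContinuousOn g (Ico a b)
  continuousOn_flux : ContinuousOn P (Ico a b)
  hasDerivAt_sol : ∀ x ∈ Ioo a b, HasDerivAt g (P x / p x) x
  hasDerivAt_flux : ∀ x ∈ Ioo a b, HasDerivAt P (V x * g x) x

namespace IsSturmSolution

variable {p V g P : ℝ → ℝ} {a b C : ℝ}

theorem of_contDiffOn (hab : a < b)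
    (hp : ContDiffOn ℝ 1 p (Icc a b)) (hp0 : ∀ x ∈ Ioo a b, p x ≠ 0)
    (hg : ContDiffOn ℝ 2 g (Icc a b)) (hga : deriv g a ≠ 0)
    (hode : ∀ x ∈ Ioo a b, deriv (fun y => p y * deriv g y) x = V x * g x) :
    IsSturmSolution p V a b g (fun x => p x * deriv g x) := by
  have hgd : ∀ x ∈ Ioo a b, DifferentiableAt ℝ g x := fun x hx =>
    (hg.differentiableOn (by norm_num)).differentiableAt (Icc_mem_nhds hx.1 hx.2)
  -- `deriv g a` is the two-sided derivative at the endpoint `a`; being nonzero, it exists and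
  -- agrees with the one-sided one.
  have hderiv : ∀ x ∈ Ico a b, derivWithin g (Icc a b) x = deriv g x := by
    rintro x ⟨hax, hxb⟩
    rcases hax.eq_or_lt with rfl | hax
    · exact (differentiableAt_of_deriv_ne_zero hga).derivWithin
        (uniqueDiffOn_Icc hab _ (left_mem_Icc.2 hab.le))
    · exact derivWithin_of_mem_nhds (Icc_mem_nhds hax hxb)
  have hg' : ContDiffOn ℝ 1 (deriv g) (Ioo a b) :=
    (hg.mono Ioo_subset_Icc_self).deriv_of_isOpen isOpen_Ioo (by norm_num)
  refine ⟨hg.continuousOn.mono Ico_subset_Icc_self, ?_, fun x hx => ?_, fun x hx => ?_⟩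
  · exact (hp.continuousOn.mono Ico_subset_Icc_self).mul
      (((hg.continuousOn_derivWithin (uniqueDiffOn_Icc hab) (by norm_num)).mono
        Ico_subset_Icc_self).congr fun x hx => (hderiv x hx).symm)
  · rw [mul_div_cancel_left₀ _ (hp0 x hx)]
    exact (hgd x hx).hasDerivAt
  · rw [← hode x hx]
    refine (DifferentiableAt.mul ?_ ?_).hasDerivAt
    · exact (hp.contDiffAt (Icc_mem_nhds hx.1 hx.2)).differentiableAt one_ne_zero
    · exact (hg'.differentiableOn one_ne_zero).differentiableAt (isOpen_Ioo.mem_nhds hx)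

theorem flux_eq_zero_of_zeros (hs : IsSturmSolution p V a b g P)
    (hp : ∀ x ∈ Ioo a b, 0 < p x) (hV : ∀ x ∈ Ioo a b, 0 ≤ V x) {x y : ℝ}
    (hax : a ≤ x) (hxy : x < y) (hyb : y < b) (hgx : g x = 0) (hgy : g y = 0) : P x = 0 := by
  have hIcc : Icc x y ⊆ Ico a b := Icc_subset_Ico hax hyb
  have hIoo : Ioo x y ⊆ Ioo a b := Ioo_subset_Ioo hax hyb.le
  have hderiv : ∀ t ∈ Ioo x y,
      HasDerivAt (fun s => g s * P s) (P t / p t * P t + g t * (V t * g t)) t := fun t ht =>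
    (hs.hasDerivAt_sol t (hIoo ht)).mul (hs.hasDerivAt_flux t (hIoo ht))
  have hmono : MonotoneOn (fun s => g s * P s) (Icc x y) := by
    refine monotoneOn_of_hasDerivWithinAt_nonneg
      (f' := fun t => P t / p t * P t + g t * (V t * g t)) (convex_Icc x y)
      ((hs.continuousOn_sol.mul hs.continuousOn_flux).mono hIcc) ?_ ?_ <;> rw [interior_Icc]
    · exact fun t ht => (hderiv t ht).hasDerivWithinAt
    · intro t ht
      have hpt := hp t (hIoo ht)
      have hVt := hV t (hIoo ht)
      have : 0 ≤ P t / p t * P t := by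
        rw [div_mul_eq_mul_div]; exact div_nonneg (mul_self_nonneg _) hpt.le
      nlinarith [mul_nonneg hVt (mul_self_nonneg (g t))]
  have hflux : MapsTo P (Ioo x y) {0} := by
    intro t ht
    have hzero : (fun s => g s * P s) =ᶠ[𝓝 t] fun _ => 0 := by
      filter_upwards [Ioo_mem_nhds ht.1 ht.2] with s hs
      have h1 := hmono ⟨le_rfl, hxy.le⟩ ⟨hs.1.le, hs.2.le⟩ hs.1.le
      have h2 := hmono ⟨hs.1.le, hs.2.le⟩ ⟨hxy.le, le_rfl⟩ hs.2.le
      simp only [hgx, hgy, zero_mul] at h1 h2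
      exact le_antisymm h2 h1
    have hsum := (hderiv t ht).unique ((hasDerivAt_const t (0 : ℝ)).congr_of_eventuallyEq hzero)
    have hPP : P t / p t * P t ≤ 0 := by
      nlinarith [mul_nonneg (hV t (hIoo ht)) (mul_self_nonneg (g t))]
    rw [div_mul_eq_mul_div, div_le_iff₀ (hp t (hIoo ht)), zero_mul] at hPP
    exact mul_self_eq_zero.1 (le_antisymm hPP (mul_self_nonneg _))
  have hx : P x ∈ closure {0} :=
    ((hs.continuousOn_flux x (hIcc (left_mem_Icc.2 hxy.le))).mono
      (Ioo_subset_Icc_self.trans hIcc)).mem_closure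
      (by rw [closure_Ioo hxy.ne]; exact left_mem_Icc.2 hxy.le) hflux
  simpa using hx

theorem energy_le (hs : IsSturmSolution p V a b g P) (hp : ∀ x ∈ Ioo a b, 0 < p x)
    (hVp : ∀ x ∈ Ioo a b, V x * p x ≤ C) {x : ℝ} (hx : x ∈ Ico a b)
    (hg : ∀ y ∈ Ioo a x, 0 < g y) (hP : ∀ y ∈ Ioo a x, P y < 0) :
    P a ^ 2 - C * g a ^ 2 ≤ P x ^ 2 - C * g x ^ 2 := by
  have hIcc : Icc a x ⊆ Ico a b := Icc_subset_Ico le_rfl hx.2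
  have hIoo : Ioo a x ⊆ Ioo a b := Ioo_subset_Ioo_right hx.2.le
  refine monotoneOn_of_hasDerivWithinAt_nonneg (f' := fun t =>
      2 * P t * (V t * g t) - C * (2 * g t * (P t / p t))) (convex_Icc a x)
    (((hs.continuousOn_flux.pow 2).sub (hs.continuousOn_sol.pow 2 |>.const_smul C)).mono hIcc)
    ?_ ?_ (left_mem_Icc.2 hx.1) (right_mem_Icc.2 hx.1) hx.1 <;> rw [interior_Icc]
  · intro t ht
    exact (((hs.hasDerivAt_flux t (hIoo ht)).pow 2).sub
      (((hs.hasDerivAt_sol t (hIoo ht)).pow 2).const_mul C)).hasDerivWithinAt.congr_deriv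
        (by simp only [Nat.cast_ofNat]; ring)
  · intro t ht
    have hpt := hp t (hIoo ht)
    have hC : V t ≤ C / p t := (le_div_iff₀ hpt).2 (hVp t (hIoo ht))
    have : 0 ≤ -(g t * P t) := by nlinarith [hg t ht, hP t ht]
    calc (0 : ℝ) ≤ 2 * -(g t * P t) * (C / p t - V t) := by
          have := sub_nonneg.2 hC; positivity
      _ = _ := by ring

theorem flux_neg (hs : IsSturmSolution p V a b g P) (hp : ∀ x ∈ Ioo a b, 0 < p x)
    (hVp : ∀ x ∈ Ioo a b, V x * p x ≤ C) (hC : 0 ≤ C) (hPa : P a < 0)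
    (hgap : C * g a ^ 2 < P a ^ 2) {x : ℝ} (hx : x ∈ Ico a b) (hg : ∀ y ∈ Ico a x, 0 < g y) :
    ∀ y ∈ Icc a x, P y < 0 := by
  intro y hy
  by_contra! hPy
  have hyb : Icc a y ⊆ Ico a b := Icc_subset_Ico le_rfl (hy.2.trans_lt hx.2)
  obtain ⟨z, hz, hPz, hneg⟩ := (hs.continuousOn_flux.mono hyb).neg.exists_first_zero hy.1
    (neg_pos.2 hPa) (neg_nonpos.2 hPy)
  have hE := hs.energy_le hp hVp (hyb ⟨hz.1.le, hz.2⟩)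
    (fun w hw => hg w ⟨hw.1.le, hw.2.trans_le (hz.2.trans hy.2)⟩)
    (fun w hw => neg_pos.1 (hneg w ⟨hw.1.le, hw.2⟩))
  rw [neg_eq_zero.1 hPz] at hE
  nlinarith [mul_nonneg hC (sq_nonneg (g z))]

theorem flux_le_neg (hs : IsSturmSolution p V a b g P) (hp : ∀ x ∈ Ioo a b, 0 < p x)
    (hVp : ∀ x ∈ Ioo a b, V x * p x ≤ C) (hC : 0 ≤ C) (hPa : P a < 0) {δ : ℝ} (hδ : 0 < δ)
    (hgap : δ ^ 2 + C * g a ^ 2 ≤ P a ^ 2) {x : ℝ} (hx : x ∈ Ico a b)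
    (hg : ∀ y ∈ Ico a x, 0 < g y) : P x ≤ -δ := by
  have hneg := hs.flux_neg hp hVp hC hPa (by nlinarith) hx hg
  have hE := hs.energy_le hp hVp hx (fun y hy => hg y ⟨hy.1.le, hy.2⟩)
    (fun y hy => hneg y ⟨hy.1.le, hy.2.le⟩)
  nlinarith [hneg x ⟨hx.1, le_rfl⟩, mul_nonneg hC (sq_nonneg (g x))]

theorem exists_first_zero (hs : IsSturmSolution p V a b g P) {pM : ℝ} (hab : a < b)
    (hp : ∀ x ∈ Ioo a b, p x ∈ Ioc 0 pM) (hVp : ∀ x ∈ Ioo a b, V x * p x ≤ C) (hC : 0 ≤ C)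
    (hga : 0 < g a) (hPa : P a < 0) {δ : ℝ} (hδ : 0 < δ) (hgap : δ ^ 2 + C * g a ^ 2 ≤ P a ^ 2)
    (hb : pM * g a < δ * (b - a)) :
    ∃ x ∈ Ioo a b, g x = 0 ∧ ∀ y ∈ Ico a x, 0 < g y := by
  have hp' : ∀ x ∈ Ioo a b, 0 < p x := fun x hx => (hp x hx).1
  have hpM : 0 < pM := by
    obtain ⟨m, hm⟩ := nonempty_Ioo.2 hab
    exact (hp m hm).1.trans_le (hp m hm).2
  set c := a + pM * g a / δ
  have hac : a < c := lt_add_of_pos_right a (by positivity)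
  have hcb : c < b := by
    have : pM * g a / δ < b - a := (div_lt_iff₀' hδ).2 hb
    linarith
  have hcont : ContinuousOn g (Icc a c) := hs.continuousOn_sol.mono (Icc_subset_Ico le_rfl hcb)
  by_cases hzero : ∃ y ∈ Icc a c, g y ≤ 0
  · obtain ⟨y, hy, hgy⟩ := hzero
    obtain ⟨z, hz, hgz, hpos⟩ := (hcont.mono (Icc_subset_Icc_right hy.2)).exists_first_zero
      hy.1 hga hgy
    exact ⟨z, ⟨hz.1, hz.2.trans_lt (hy.2.trans_lt hcb)⟩, hgz, hpos⟩
  push Not at hzero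
  have hslope : ∀ y ∈ Ioo a c, P y / p y ≤ -δ / pM := by
    intro y hy
    have hPy := hs.flux_le_neg hp' hVp hC hPa hδ hgap ⟨hy.1.le, hy.2.trans hcb⟩
      (fun w hw => hzero w ⟨hw.1, hw.2.le.trans hy.2.le⟩)
    obtain ⟨hpy, hpyM⟩ := hp y ⟨hy.1, hy.2.trans hcb⟩
    rw [div_le_div_iff₀ hpy hpM]
    nlinarith
  obtain ⟨ξ, hξ, hξc⟩ := exists_hasDerivAt_eq_slope g (fun y => P y / p y) hac hcont
    (fun y hy => hs.hasDerivAt_sol y ⟨hy.1, hy.2.trans hcb⟩)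
  have hdrop : g c - g a ≤ -δ / pM * (c - a) := by
    rw [← div_le_iff₀ (sub_pos.2 hac), ← hξc]
    exact hslope ξ hξ
  have : -δ / pM * (c - a) = -g a := by
    simp only [c]
    field_simp
    ring
  linarith [hzero c (right_mem_Icc.2 hac.le)]

theorem existsUnique_zero (hs : IsSturmSolution p V a b g P) {pM K : ℝ} (hab : a < b)
    (hp : ∀ x ∈ Ioo a b, p x ∈ Ioc 0 pM) (hV : ∀ x ∈ Ioo a b, V x ∈ Icc 0 K)
    (hga : 0 < g a) (hPa : P a < 0) {δ : ℝ} (hδ : 0 < δ)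
    (hgap : δ ^ 2 + K * pM * g a ^ 2 ≤ P a ^ 2) (hb : pM * g a < δ * (b - a)) :
    ∃! x, x ∈ Ioo a b ∧ g x = 0 := by
  have hp' : ∀ x ∈ Ioo a b, 0 < p x := fun x hx => (hp x hx).1
  have hVp : ∀ x ∈ Ioo a b, V x * p x ≤ K * pM := fun x hx =>
    mul_le_mul (hV x hx).2 (hp x hx).2 (hp x hx).1.le ((hV x hx).1.trans (hV x hx).2)
  have hC : 0 ≤ K * pM := by
    obtain ⟨m, hm⟩ := nonempty_Ioo.2 hab
    exact (mul_nonneg (hV m hm).1 (hp m hm).1.le).trans (hVp m hm)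
  obtain ⟨x, hx, hgx, hpos⟩ := hs.exists_first_zero hab hp hVp hC hga hPa hδ hgap hb
  have hPx : P x < 0 := hs.flux_neg hp' hVp hC hPa (by nlinarith) ⟨hx.1.le, hx.2⟩ hpos x
    (right_mem_Icc.2 hx.1.le)
  refine ⟨x, ⟨hx, hgx⟩, fun y ⟨hy, hgy⟩ => ?_⟩
  rcases lt_trichotomy y x with hyx | rfl | hxy
  · exact absurd hgy (hpos y ⟨hy.1.le, hyx⟩).ne'
  · rfl
  · exact absurd (hs.flux_eq_zero_of_zeros hp' (fun z hz => (hV z hz).1) hx.1.le hxy hy.2 hgx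
      hgy) hPx.ne

end IsSturmSolution

theorem stmt_11_general (L a1 a2 : ℝ) (hL : 0 < L) (ha1 : 0 < a1)
    (p q r : ℝ → ℝ) (f : ℝ → ℝ → ℝ)
    (hp : ContDiffOn ℝ 1 p (Icc 0 L)) (hq : ContinuousOn q (Icc 0 L))
    (hr : ContinuousOn r (Icc 0 L))
    (hppos : ∀ x ∈ Icc 0 L, 0 < p x) (hqpos : ∀ x ∈ Icc 0 L, 0 < q x)
    (hrpos : ∀ x ∈ Icc 0 L, 0 < r x)
    (hfsmooth : ∀ μ : ℝ, ContDiffOn ℝ 2 (f μ) (Icc 0 L))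
    (hode : ∀ μ : ℝ, ∀ x ∈ Icc 0 L,
      deriv (fun y => p y * deriv (f μ) y) x - (q x - μ * r x) * f μ x = 0)
    (hinit0 : ∀ μ : ℝ, f μ 0 = 1)
    (hinit1 : ∀ μ : ℝ, deriv (f μ) 0 = a1 * μ + a2) :
    ∃ Λ : ℝ, ∀ μ : ℝ, μ < Λ →
      ∃! x, x ∈ Ioo 0 L ∧ f μ x = 0 := by
  obtain ⟨pM, hpM⟩ := isCompact_Icc.bddAbove_image hp.continuousOn
  obtain ⟨Q, hQ⟩ := isCompact_Icc.bddAbove_image hq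
  obtain ⟨R, hR⟩ := isCompact_Icc.bddAbove_image hr
  have h0 : (0 : ℝ) ∈ Icc 0 L := left_mem_Icc.2 hL.le
  -- the gap `δ ^ 2 + (Q - μ R) pM ≤ P(0) ^ 2` with `δ = 2 pM / L`, so that `f` vanishes by `L / 2`
  obtain ⟨Λ, hΛ⟩ := eventually_atBot.1 <| (eventually_le_atBot 0).and <|
    eventually_atBot_neg_and_affine_le_sq (mul_pos (hppos 0 h0) ha1) (p 0 * a2)
      ((2 * pM / L) ^ 2 + Q * pM) (-(R * pM))
  refine ⟨Λ, fun μ hμ => ?_⟩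
  obtain ⟨hμ0, hP0, hgap⟩ := hΛ μ hμ.le
  have hbound : ∀ x ∈ Icc 0 L, p x ∈ Ioc 0 pM := fun x hx =>
    ⟨hppos x hx, hpM (mem_image_of_mem p hx)⟩
  have hpM0 : 0 < pM := (hbound 0 h0).1.trans_le (hbound 0 h0).2
  have hV : ∀ x ∈ Icc 0 L, q x - μ * r x ∈ Icc 0 (Q - μ * R) := fun x hx =>
    ⟨by nlinarith [hqpos x hx, hrpos x hx],
      by nlinarith [hQ (mem_image_of_mem q hx), hR (mem_image_of_mem r hx)]⟩
  have hs := IsSturmSolution.of_contDiffOn (V := fun x => q x - μ * r x) hL hp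
    (fun x hx => (hppos x (Ioo_subset_Icc_self hx)).ne') (hfsmooth μ)
    (by rw [hinit1]; nlinarith [hppos 0 h0])
    (fun x hx => sub_eq_zero.1 (hode μ x (Ioo_subset_Icc_self hx)))
  refine hs.existsUnique_zero (δ := 2 * pM / L) hL
    (fun x hx => hbound x (Ioo_subset_Icc_self hx)) (fun x hx => hV x (Ioo_subset_Icc_self hx))
    ?_ ?_ (by positivity) ?_ ?_ <;>
    simp only [hinit0, hinit1, sub_zero]
  · exact one_pos
  · linarith
  · linarith
  · rw [div_mul_cancel₀ _ hL.ne']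
    linarith

/-- For all sufficiently negative `λ`, the solution `f(·;λ)` of the initial value
problem has exactly one zero in `(0,L)`. -/
theorem stmt_11 (L a1 a2 : ℝ) (hL : 0 < L) (ha1 : 0 < a1) (ha2 : 0 < a2)
    (p q r : ℝ → ℝ) (f : ℝ → ℝ → ℝ)
    (hp : ContDiffOn ℝ 1 p (Icc 0 L)) (hq : ContinuousOn q (Icc 0 L))
    (hr : ContinuousOn r (Icc 0 L))
    (hppos : ∀ x ∈ Icc 0 L, 0 < p x) (hqpos : ∀ x ∈ Icc 0 L, 0 < q x)
    (hrpos : ∀ x ∈ Icc 0 L, 0 < r x)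
    (hp' : ∀ x ∈ Icc 0 L, 0 < deriv p x)
    (hfsmooth : ∀ μ : ℝ, ContDiffOn ℝ 2 (f μ) (Icc 0 L))
    (hode : ∀ μ : ℝ, ∀ x ∈ Icc 0 L,
      deriv (fun y => p y * deriv (f μ) y) x - (q x - μ * r x) * f μ x = 0)
    (hinit0 : ∀ μ : ℝ, f μ 0 = 1)
    (hinit1 : ∀ μ : ℝ, deriv (f μ) 0 = a1 * μ + a2) :
    ∃ Λ : ℝ, ∀ μ : ℝ, μ < Λ →
      ∃! x, x ∈ Ioo 0 L ∧ f μ x = 0 :=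
  stmt_11_general L a1 a2 hL ha1 p q r f hp hq hr hppos hqpos hrpos hfsmooth hode hinit0 hinit1
end

section
/- Let p, q, r be positive C¹ functions on [0,L], λ > 0, and let f(·;λ) solve (p f')' - (q - λ r) f = 0 with f(0;λ)=1, f'(0;λ)=α₁λ+α₂ (α₁, α₂ > 0). If f(·;λ) has at least n simple zeros z₁(λ) < … < z_n(λ) in (0,L), then for each j the identity p(z_{j+1})(f'(z_{j+1};λ))² z_{j+1}'(λ) = p(z_j)(f'(z_j;λ))² z_j'(λ) - ∫_{z_j}^{z_{j+1}} r f² dx holds, and by induction z_j'(λ) < 0 for every j = 1,…,n: all zeros move left as λ increases. -/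
/-!
Differentiating the equation in `λ` shows that `g = ∂f/∂λ` solves
`(p g')' - (q - λ r) g = -r f`, so the modified Wronskian `W = p (f' g - f g')` satisfies
`W' = r f²`. Differentiating `f (z_j(λ); λ) = 0` gives `p f'(z_j)² z_j' = -W(z_j)`, so the
recursion is the fundamental theorem of calculus for `W` on `[z_j, z_{j+1}]`. The base identity
says `W(z_1) > 0`, and `W` can only grow from one zero to the next, so every `z_j'` is negative.
The interchange of the `λ`- and `x`-derivatives is justified by writing `f` and `p f'` as
integrals of their `x`-derivatives and differentiating under the integral sign.
-/

open Set Filter Topology Function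

theorem hasDerivAt_intervalIntegral_of_continuousOn {F F' : ℝ → ℝ → ℝ} {s : Set ℝ}
    {μ₀ a b : ℝ} (hs : s ∈ 𝓝 μ₀) (hF : ∀ μ ∈ s, ContinuousOn (F μ) (uIcc a b))
    (hF' : ContinuousOn (uncurry F') (s ×ˢ uIcc a b))
    (hderiv : ∀ μ ∈ s, ∀ t ∈ uIcc a b, HasDerivAt (fun ν => F ν t) (F' μ t) μ) :
    HasDerivAt (fun μ => ∫ t in a..b, F μ t) (∫ t in a..b, F' μ₀ t) μ₀ := by
  obtain ⟨δ, hδ, hball⟩ := Metric.nhds_basis_closedBall.mem_iff.1 hs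
  obtain ⟨C, hC⟩ := ((isCompact_closedBall μ₀ δ).prod isCompact_uIcc).exists_bound_of_continuousOn
    (hF'.mono (prod_mono hball subset_rfl))
  have hμ₀ : μ₀ ∈ s := mem_of_mem_nhds hs
  refine (intervalIntegral.hasDerivAt_integral_of_dominated_loc_of_deriv_le
    (bound := fun _ => C) (Metric.ball_mem_nhds μ₀ hδ) ?_ (hF μ₀ hμ₀).intervalIntegrable
    ?_ ?_ intervalIntegrable_const ?_).2
  · filter_upwards [hs] with μ hμ
    exact ((hF μ hμ).mono uIoc_subset_uIcc).aestronglyMeasurable measurableSet_uIoc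
  · exact ((hF'.uncurry_left μ₀ hμ₀).mono uIoc_subset_uIcc).aestronglyMeasurable
      measurableSet_uIoc
  · exact Eventually.of_forall fun t ht μ hμ =>
      hC (μ, t) ⟨Metric.ball_subset_closedBall hμ, uIoc_subset_uIcc ht⟩
  · exact Eventually.of_forall fun t ht μ hμ =>
      hderiv μ (hball (Metric.ball_subset_closedBall hμ)) t (uIoc_subset_uIcc ht)

theorem hasDerivAt_deriv_param_of_hasDerivAt {Φ g g' : ℝ → ℝ → ℝ} {s : Set ℝ} {μ₀ a b x : ℝ}
    (hs : s ∈ 𝓝 μ₀) (hΦa : DifferentiableAt ℝ (fun μ => Φ μ a) μ₀)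
    (hΦ : ∀ μ ∈ s, ContinuousOn (Φ μ) (Icc a b))
    (hΦ' : ∀ μ ∈ s, ∀ t ∈ Ioo a b, HasDerivAt (Φ μ) (g μ t) t)
    (hg : ∀ μ ∈ s, ContinuousOn (g μ) (Icc a b))
    (hg' : ContinuousOn (uncurry g') (s ×ˢ Icc a b))
    (hgderiv : ∀ μ ∈ s, ∀ t ∈ Icc a b, HasDerivAt (fun ν => g ν t) (g' μ t) μ)
    (hx : x ∈ Ioo a b) :
    HasDerivAt (fun y => deriv (fun μ => Φ μ y) μ₀) (g' μ₀ x) x := by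
  have hg'μ₀ : ContinuousOn (g' μ₀) (Icc a b) := hg'.uncurry_left μ₀ (mem_of_mem_nhds hs)
  have hsub : ∀ y ∈ Ioo a b, uIcc a y ⊆ Icc a b := fun y hy =>
    ordConnected_Icc.uIcc_subset (left_mem_Icc.2 (hy.1.trans hy.2).le) (Ioo_subset_Icc_self hy)
  have hrepr : ∀ y ∈ Ioo a b,
      deriv (fun μ => Φ μ y) μ₀ = deriv (fun μ => Φ μ a) μ₀ + ∫ t in a..y, g' μ₀ t := by
    intro y hy
    have hFTC : ∀ μ ∈ s, Φ μ y = Φ μ a + ∫ t in a..y, g μ t := by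
      intro μ hμ
      rw [intervalIntegral.integral_eq_sub_of_hasDeriv_right_of_le hy.1.le
        ((hΦ μ hμ).mono (Icc_subset_Icc_right hy.2.le))
        (fun t ht => (hΦ' μ hμ t ⟨ht.1, ht.2.trans hy.2⟩).hasDerivWithinAt)
        ((hg μ hμ).mono (hsub y hy)).intervalIntegrable]
      ring
    have hderiv := hΦa.hasDerivAt.add (hasDerivAt_intervalIntegral_of_continuousOn hs
      (fun μ hμ => (hg μ hμ).mono (hsub y hy)) (hg'.mono (prod_mono subset_rfl (hsub y hy)))
      (fun μ hμ t ht => hgderiv μ hμ t (hsub y hy ht)))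
    exact (hderiv.congr_of_eventuallyEq (eventually_of_mem hs hFTC)).deriv
  have hprim : HasDerivAt (fun y => ∫ t in a..y, g' μ₀ t) (g' μ₀ x) x :=
    intervalIntegral.integral_hasDerivAt_right
      ((hg'μ₀.mono (hsub x hx)).intervalIntegrable)
      ((hg'μ₀.mono Ioo_subset_Icc_self).stronglyMeasurableAtFilter isOpen_Ioo x hx)
      (hg'μ₀.continuousAt (Icc_mem_nhds hx.1 hx.2))
  exact (hprim.const_add _).congr_of_eventuallyEq
    (eventually_of_mem (isOpen_Ioo.mem_nhds hx) hrepr)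

section Partials

variable {F : ℝ → ℝ → ℝ}

theorem ContDiff.hasDerivAt_uncurry_fst (hF : ContDiff ℝ 1 (uncurry F)) (μ x : ℝ) :
    HasDerivAt (fun ν => F ν x) (deriv (fun ν => F ν x) μ) μ :=
  (((hF.differentiable one_ne_zero).comp
    (differentiable_id.prodMk (differentiable_const x))) μ).hasDerivAt

theorem ContDiff.hasDerivAt_uncurry_snd (hF : ContDiff ℝ 1 (uncurry F)) (μ x : ℝ) :
    HasDerivAt (F μ) (deriv (F μ) x) x :=
  (((hF.differentiable one_ne_zero).comp
    ((differentiable_const μ).prodMk differentiable_id)) x).hasDerivAt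

theorem ContDiff.continuous_deriv_uncurry_fst (hF : ContDiff ℝ 1 (uncurry F)) :
    Continuous fun w : ℝ × ℝ => deriv (fun ν => F ν w.2) w.1 := by
  have hline : ∀ w : ℝ × ℝ, HasDerivAt (fun ν : ℝ => (ν, w.2)) ((1 : ℝ), (0 : ℝ)) w.1 :=
    fun w => (hasDerivAt_id w.1).prodMk (hasDerivAt_const w.1 w.2)
  have hfderiv : ∀ w : ℝ × ℝ,
      deriv (fun ν => F ν w.2) w.1 = fderiv ℝ (uncurry F) w (1, 0) := fun w =>
    (((hF.differentiable one_ne_zero) w).hasFDerivAt.comp_hasDerivAt (l := uncurry F) w.1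
      (hline w)).deriv
  simp_rw [hfderiv]
  exact (hF.continuous_fderiv one_ne_zero).clm_apply continuous_const

theorem ContDiff.hasDerivAt_mixed_partial (hF : ContDiff ℝ 1 (uncurry F))
    (hF' : ContDiff ℝ 1 (uncurry fun μ => deriv (F μ))) (μ x : ℝ) :
    HasDerivAt (fun y => deriv (fun ν => F ν y) μ) (deriv (fun ν => deriv (F ν) x) μ) x :=
  hasDerivAt_deriv_param_of_hasDerivAt (g' := fun ν t => deriv (fun κ => deriv (F κ) t) ν)
    (s := univ) (a := x - 1) (b := x + 1) univ_mem
    (hF.hasDerivAt_uncurry_fst μ (x - 1)).differentiableAt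
    (fun _ _ => (hF.continuous.comp (continuous_const.prodMk continuous_id)).continuousOn)
    (fun ν _ t _ => hF.hasDerivAt_uncurry_snd ν t)
    (fun _ _ => (hF'.continuous.comp (continuous_const.prodMk continuous_id)).continuousOn)
    hF'.continuous_deriv_uncurry_fst.continuousOn
    (fun ν _ t _ => hF'.hasDerivAt_uncurry_fst ν t)
    ⟨by linarith, by linarith⟩

end Partials

section ParameterDependentODE

variable {p q r : ℝ → ℝ} {f : ℝ → ℝ → ℝ} {L lam x : ℝ}

theorem hasDerivAt_mul_deriv_of_ode (hp : DifferentiableOn ℝ p (Icc 0 L))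
    (hf' : ContDiff ℝ 1 (uncurry fun μ => deriv (f μ)))
    (hode : ∀ μ : ℝ, ∀ x ∈ Icc 0 L,
      deriv (fun y => p y * deriv (f μ) y) x - (q x - μ * r x) * f μ x = 0)
    (μ : ℝ) (hx : x ∈ Ioo 0 L) :
    HasDerivAt (fun y => p y * deriv (f μ) y) ((q x - μ * r x) * f μ x) x := by
  have hdiff : DifferentiableAt ℝ (fun y => p y * deriv (f μ) y) x :=
    (hp.differentiableAt (Icc_mem_nhds hx.1 hx.2)).mul
      (hf'.hasDerivAt_uncurry_snd μ x).differentiableAt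
  rw [← sub_eq_zero.1 (hode μ x (Ioo_subset_Icc_self hx))]
  exact hdiff.hasDerivAt

theorem hasDerivAt_mul_deriv_param_of_ode (hp : DifferentiableOn ℝ p (Icc 0 L))
    (hq : ContinuousOn q (Icc 0 L)) (hr : ContinuousOn r (Icc 0 L))
    (hf : ContDiff ℝ 1 (uncurry f)) (hf' : ContDiff ℝ 1 (uncurry fun μ => deriv (f μ)))
    (hode : ∀ μ : ℝ, ∀ x ∈ Icc 0 L,
      deriv (fun y => p y * deriv (f μ) y) x - (q x - μ * r x) * f μ x = 0)
    (hx : x ∈ Ioo 0 L) :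
    HasDerivAt (fun y => p y * deriv (fun μ => deriv (f μ) y) lam)
      (-(r x * f lam x) + (q x - lam * r x) * deriv (fun μ => f μ x) lam) x := by
  have hfc : ∀ μ, Continuous (f μ) := fun μ =>
    hf.continuous.comp (continuous_const.prodMk continuous_id)
  have hf'c : ∀ μ, Continuous (deriv (f μ)) := fun μ =>
    hf'.continuous.comp (continuous_const.prodMk continuous_id)
  have hqc : ContinuousOn (fun w : ℝ × ℝ => q w.2) (univ ×ˢ Icc 0 L) :=
    hq.comp continuous_snd.continuousOn fun _ hw => hw.2
  have hrc : ContinuousOn (fun w : ℝ × ℝ => r w.2) (univ ×ˢ Icc 0 L) :=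
    hr.comp continuous_snd.continuousOn fun _ hw => hw.2
  have hparam := hasDerivAt_deriv_param_of_hasDerivAt (Φ := fun μ y => p y * deriv (f μ) y)
    (g := fun μ t => (q t - μ * r t) * f μ t)
    (g' := fun μ t => -(r t * f μ t) + (q t - μ * r t) * deriv (fun ν => f ν t) μ)
    (s := univ) (μ₀ := lam) univ_mem
    ((hf'.hasDerivAt_uncurry_fst lam 0).differentiableAt.const_mul (p 0))
    (fun μ _ => hp.continuousOn.mul (hf'c μ).continuousOn)
    (fun μ _ t ht => hasDerivAt_mul_deriv_of_ode hp hf' hode μ ht)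
    (fun μ _ => (hq.sub (continuousOn_const.mul hr)).mul (hfc μ).continuousOn)
    ((hrc.mul hf.continuous.continuousOn).neg.add
      ((hqc.sub (continuous_fst.continuousOn.mul hrc)).mul
        hf.continuous_deriv_uncurry_fst.continuousOn))
    (fun μ _ t _ => (((hasDerivAt_mul_const (r t)).const_sub (q t)).mul
      (hf.hasDerivAt_uncurry_fst μ t)).congr_deriv (by ring))
    hx
  have hfun : (fun y => deriv (fun μ => p y * deriv (f μ) y) lam)
      = fun y => p y * deriv (fun μ => deriv (f μ) y) lam :=
    funext fun y => deriv_const_mul _ (hf'.hasDerivAt_uncurry_fst lam y).differentiableAt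
  rwa [hfun] at hparam

noncomputable def paramWronskian (p : ℝ → ℝ) (f : ℝ → ℝ → ℝ) (lam y : ℝ) : ℝ :=
  p y * deriv (f lam) y * deriv (fun μ => f μ y) lam
    - f lam y * (p y * deriv (fun μ => deriv (f μ) y) lam)

theorem hasDerivAt_paramWronskian (hp : DifferentiableOn ℝ p (Icc 0 L))
    (hq : ContinuousOn q (Icc 0 L)) (hr : ContinuousOn r (Icc 0 L))
    (hf : ContDiff ℝ 1 (uncurry f)) (hf' : ContDiff ℝ 1 (uncurry fun μ => deriv (f μ)))
    (hode : ∀ μ : ℝ, ∀ x ∈ Icc 0 L,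
      deriv (fun y => p y * deriv (f μ) y) x - (q x - μ * r x) * f μ x = 0)
    (hx : x ∈ Ioo 0 L) :
    HasDerivAt (paramWronskian p f lam) (r x * f lam x ^ 2) x :=
  (((hasDerivAt_mul_deriv_of_ode hp hf' hode lam hx).mul
      (hf.hasDerivAt_mixed_partial hf' lam x)).sub
    ((hf.hasDerivAt_uncurry_snd lam x).mul
      (hasDerivAt_mul_deriv_param_of_ode hp hq hr hf hf' hode hx))).congr_deriv (by ring)

theorem integral_mul_sq_eq_paramWronskian_sub {a b : ℝ} (hp : DifferentiableOn ℝ p (Icc 0 L))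
    (hq : ContinuousOn q (Icc 0 L)) (hr : ContinuousOn r (Icc 0 L))
    (hf : ContDiff ℝ 1 (uncurry f)) (hf' : ContDiff ℝ 1 (uncurry fun μ => deriv (f μ)))
    (hode : ∀ μ : ℝ, ∀ x ∈ Icc 0 L,
      deriv (fun y => p y * deriv (f μ) y) x - (q x - μ * r x) * f μ x = 0)
    (ha : a ∈ Ioo 0 L) (hb : b ∈ Ioo 0 L) :
    ∫ x in a..b, r x * f lam x ^ 2 = paramWronskian p f lam b - paramWronskian p f lam a := by
  have hab : uIcc a b ⊆ Ioo 0 L := ordConnected_Ioo.uIcc_subset ha hb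
  refine intervalIntegral.integral_eq_sub_of_hasDerivAt
    (fun t ht => hasDerivAt_paramWronskian hp hq hr hf hf' hode (hab ht)) ?_
  exact ((hr.mono Ioo_subset_Icc_self).mul
    ((hf.continuous.comp (continuous_const.prodMk continuous_id)).pow 2).continuousOn).mono
      hab |>.intervalIntegrable

theorem mul_deriv_sq_mul_eq_neg_paramWronskian {z z' : ℝ} (hz : f lam z = 0)
    (hz' : z' = -deriv (fun μ => f μ z) lam / deriv (f lam) z) :
    p z * deriv (f lam) z ^ 2 * z' = -paramWronskian p f lam z := by
  rw [hz', paramWronskian, hz]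
  field_simp
  ring

end ParameterDependentODE

theorem neg_of_neg_of_step_le {M : ℕ → ℝ} {n : ℕ} (h1 : M 1 < 0)
    (hstep : ∀ j, 1 ≤ j → j < n → M (j + 1) ≤ M j) : ∀ j, 1 ≤ j → j ≤ n → M j < 0 := by
  intro j hj
  induction j, hj using Nat.le_induction with
  | base => exact fun _ => h1
  | succ j hj ih => exact fun hjn => (hstep j hj hjn).trans_lt (ih (Nat.le_of_succ_le hjn))

theorem stmt_15_general (L a2 lam : ℝ) (n : ℕ) (hn : 1 ≤ n)
    (ha2 : 0 < a2) (hlam : 0 < lam)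
    (p q r : ℝ → ℝ) (f : ℝ → ℝ → ℝ) (z : ℕ → ℝ → ℝ) (D : Set ℝ)
    (hmem : lam ∈ D)
    (hp : ContDiffOn ℝ 1 p (Icc 0 L)) (hq : ContDiffOn ℝ 1 q (Icc 0 L))
    (hr : ContDiffOn ℝ 1 r (Icc 0 L))
    (hppos : ∀ x ∈ Icc 0 L, 0 < p x) (hqpos : ∀ x ∈ Icc 0 L, 0 < q x)
    (hrpos : ∀ x ∈ Icc 0 L, 0 < r x)
    (hjoint : ContDiff ℝ 1 (fun w : ℝ × ℝ => f w.1 w.2))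
    (hjoint' : ContDiff ℝ 1 (fun w : ℝ × ℝ => deriv (f w.1) w.2))
    (hode : ∀ μ : ℝ, ∀ x ∈ Icc 0 L,
      deriv (fun y => p y * deriv (f μ) y) x - (q x - μ * r x) * f μ x = 0)
    (hzeros : ∀ μ ∈ D, ∀ j, 1 ≤ j → j ≤ n →
      z j μ ∈ Ioo 0 L ∧ f μ (z j μ) = 0 ∧ deriv (f μ) (z j μ) ≠ 0)
    (horder : ∀ μ ∈ D, ∀ i j, 1 ≤ i → i < j → j ≤ n → z i μ < z j μ)
    (hIFT : ∀ μ ∈ D, ∀ j, 1 ≤ j → j ≤ n →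
      deriv (z j) μ = -(deriv (fun ν => f ν (z j μ)) μ) / deriv (f μ) (z j μ))
    (hbase : p (z 1 lam) * deriv (f lam) (z 1 lam) *
        deriv (fun ν => f ν (z 1 lam)) lam
      = lam⁻¹ * (a2 + ∫ x in (0:ℝ)..(z 1 lam),
          (p x * (deriv (f lam) x) ^ 2 + q x * (f lam x) ^ 2))) :
    (∀ j, 1 ≤ j → j < n →
      p (z (j+1) lam) * (deriv (f lam) (z (j+1) lam)) ^ 2 * deriv (z (j+1)) lam
        = p (z j lam) * (deriv (f lam) (z j lam)) ^ 2 * deriv (z j) lam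
          - ∫ x in (z j lam)..(z (j+1) lam), r x * (f lam x) ^ 2) ∧
    (∀ j, 1 ≤ j → j ≤ n → deriv (z j) lam < 0) := by
  set M : ℕ → ℝ := fun j => p (z j lam) * deriv (f lam) (z j lam) ^ 2 * deriv (z j) lam
  have hzmem : ∀ j, 1 ≤ j → j ≤ n → z j lam ∈ Ioo 0 L := fun j h1 h2 =>
    (hzeros lam hmem j h1 h2).1
  have hMW : ∀ j, 1 ≤ j → j ≤ n → M j = -paramWronskian p f lam (z j lam) := fun j h1 h2 =>
    mul_deriv_sq_mul_eq_neg_paramWronskian (hzeros lam hmem j h1 h2).2.1 (hIFT lam hmem j h1 h2)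
  have hstep : ∀ j, 1 ≤ j → j < n →
      M (j + 1) = M j - ∫ x in (z j lam)..(z (j + 1) lam), r x * f lam x ^ 2 := by
    intro j h1 h2
    rw [hMW (j + 1) (by omega) h2, hMW j h1 h2.le,
      integral_mul_sq_eq_paramWronskian_sub (hp.differentiableOn one_ne_zero) hq.continuousOn
        hr.continuousOn hjoint hjoint' hode (hzmem j h1 h2.le) (hzmem (j + 1) (by omega) h2)]
    ring
  have hM1 : M 1 < 0 := by
    have hI : 0 ≤ ∫ x in (0:ℝ)..(z 1 lam), (p x * deriv (f lam) x ^ 2 + q x * f lam x ^ 2) :=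
      intervalIntegral.integral_nonneg (hzmem 1 le_rfl hn).1.le fun u hu =>
        have hu' : u ∈ Icc 0 L := ⟨hu.1, hu.2.trans (hzmem 1 le_rfl hn).2.le⟩
        add_nonneg (mul_nonneg (hppos u hu').le (sq_nonneg _))
          (mul_nonneg (hqpos u hu').le (sq_nonneg _))
    rw [hMW 1 le_rfl hn, paramWronskian, (hzeros lam hmem 1 le_rfl hn).2.1, zero_mul, sub_zero,
      hbase, neg_neg_iff_pos]
    exact mul_pos (inv_pos.2 hlam) (add_pos_of_pos_of_nonneg ha2 hI)
  have hMneg := neg_of_neg_of_step_le hM1 fun j h1 h2 => by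
    rw [hstep j h1 h2, sub_le_self_iff]
    exact intervalIntegral.integral_nonneg (horder lam hmem j (j + 1) h1 (by omega) h2).le
      fun u hu => mul_nonneg (hrpos u ⟨(hzmem j h1 h2.le).1.le.trans hu.1,
        hu.2.trans (hzmem (j + 1) (by omega) h2).2.le⟩).le (sq_nonneg _)
  refine ⟨hstep, fun j h1 h2 => neg_of_mul_neg_right (hMneg j h1 h2) ?_⟩
  exact mul_nonneg (hppos _ (Ioo_subset_Icc_self (hzmem j h1 h2))).le (sq_nonneg _)

/-- Recursive identity between consecutive zeros `z_j(λ)`, `z_{j+1}(λ)` and the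
consequence that all zeros move left as `λ > 0` increases. -/
theorem stmt_15 (L a1 a2 lam : ℝ) (n : ℕ) (hn : 1 ≤ n) (hL : 0 < L)
    (ha1 : 0 < a1) (ha2 : 0 < a2) (hlam : 0 < lam)
    (p q r : ℝ → ℝ) (f : ℝ → ℝ → ℝ) (z : ℕ → ℝ → ℝ) (D : Set ℝ)
    (hD : IsOpen D) (hmem : lam ∈ D) (hDpos : D ⊆ Ioi 0)
    (hp : ContDiffOn ℝ 1 p (Icc 0 L)) (hq : ContDiffOn ℝ 1 q (Icc 0 L))
    (hr : ContDiffOn ℝ 1 r (Icc 0 L))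
    (hppos : ∀ x ∈ Icc 0 L, 0 < p x) (hqpos : ∀ x ∈ Icc 0 L, 0 < q x)
    (hrpos : ∀ x ∈ Icc 0 L, 0 < r x)
    (hfsmooth : ∀ μ : ℝ, ContDiffOn ℝ 2 (f μ) (Icc 0 L))
    (hjoint : ContDiff ℝ 1 (fun w : ℝ × ℝ => f w.1 w.2))
    (hjoint' : ContDiff ℝ 1 (fun w : ℝ × ℝ => deriv (f w.1) w.2))
    (hode : ∀ μ : ℝ, ∀ x ∈ Icc 0 L,
      deriv (fun y => p y * deriv (f μ) y) x - (q x - μ * r x) * f μ x = 0)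
    (hinit0 : ∀ μ : ℝ, f μ 0 = 1)
    (hinit1 : ∀ μ : ℝ, deriv (f μ) 0 = a1 * μ + a2)
    (hzsmooth : ∀ j, 1 ≤ j → j ≤ n → ContDiffOn ℝ 1 (z j) D)
    (hzeros : ∀ μ ∈ D, ∀ j, 1 ≤ j → j ≤ n →
      z j μ ∈ Ioo 0 L ∧ f μ (z j μ) = 0 ∧ deriv (f μ) (z j μ) ≠ 0)
    (horder : ∀ μ ∈ D, ∀ i j, 1 ≤ i → i < j → j ≤ n → z i μ < z j μ)
    (hIFT : ∀ μ ∈ D, ∀ j, 1 ≤ j → j ≤ n →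
      deriv (z j) μ = -(deriv (fun ν => f ν (z j μ)) μ) / deriv (f μ) (z j μ))
    (hbase : p (z 1 lam) * deriv (f lam) (z 1 lam) *
        deriv (fun ν => f ν (z 1 lam)) lam
      = lam⁻¹ * (a2 + ∫ x in (0:ℝ)..(z 1 lam),
          (p x * (deriv (f lam) x) ^ 2 + q x * (f lam x) ^ 2))) :
    (∀ j, 1 ≤ j → j < n →
      p (z (j+1) lam) * (deriv (f lam) (z (j+1) lam)) ^ 2 * deriv (z (j+1)) lam
        = p (z j lam) * (deriv (f lam) (z j lam)) ^ 2 * deriv (z j) lam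
          - ∫ x in (z j lam)..(z (j+1) lam), r x * (f lam x) ^ 2) ∧
    (∀ j, 1 ≤ j → j ≤ n → deriv (z j) lam < 0) :=
  stmt_15_general L a2 lam n hn ha2 hlam p q r f z D hmem hp hq hr hppos hqpos hrpos hjoint hjoint'
    hode hzeros horder hIFT hbase
end
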